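/- arXiv:1505.03132 — 6 statements merged into one kernel-verified Lean document; each statement's English description precedes it below -/
import Mathlib

section
/- Let B be an n×s integer matrix with all columns nonzero, let M = cone(B) ∩ ℤ^n \ {0}, where cone(B) = {Bt : t ∈ ℝ^s, t ≥ 0}, and let c ∈ ℝ^n. If the infimum of c⋅x over x ∈ M is attained, then it is attained at some point of M that lies in the convex hull of the origin together with the columns of B. -/
/-! Write the minimiser as `x₀ = ∑ t_j b_j` with `t ≥ 0` over the columns `b_j` of `B`. The columns
and `2 x₀` lie in `M`, so `c⋅x₀ ≤ c⋅(2 x₀)` gives `c⋅x₀ ≥ 0`. If `∑ t_j ≤ 1`, then `x₀` already lies in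
`conv(0, B)`. Otherwise take a column `b_k` minimising `c⋅b_j`: as `c⋅b_k ≥ c⋅x₀ ≥ 0`,
`c⋅b_k ≤ (∑ t_j) c⋅b_k ≤ ∑ t_j c⋅b_j = c⋅x₀`, so the vertex `b_k` is a minimiser as well. -/

open Matrix

section

variable {E ι : Type*} [AddCommGroup E] [Module ℝ E] [Fintype ι]

theorem sum_smul_mem_convexHull_zero_union_range {t : ι → ℝ} (ht : ∀ j, 0 ≤ t j)
    (hsum : ∑ j, t j ≤ 1) (v : ι → E) :
    ∑ j, t j • v j ∈ convexHull ℝ ({0} ∪ Set.range v) := by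
  let w : Option ι → ℝ := fun o => o.elim (1 - ∑ j, t j) t
  let u : Option ι → E := fun o => o.elim 0 v
  have hcomb : ∑ o, w o • u o = ∑ j, t j • v j := by
    simp [w, u, Fintype.sum_option]
  rw [← hcomb]
  refine (convex_convexHull ℝ _).sum_mem (fun o _ => ?_) ?_ (fun o _ => subset_convexHull ℝ _ ?_)
  · cases o with
    | none => exact sub_nonneg.2 hsum
    | some j => exact ht j
  · simp [w, Fintype.sum_option]
  · cases o with
    | none => exact Or.inl rfl
    | some j => exact Or.inr ⟨j, rfl⟩

theorem exists_isMinOn_mem_convexHull_zero_union_range (f : E →ₗ[ℝ] ℝ) {M : Set E}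
    {v : ι → E} (hv : ∀ j, v j ∈ M) {t : ι → ℝ} (ht : ∀ j, 0 ≤ t j)
    (hmem : ∑ j, t j • v j ∈ M) (hmin : IsMinOn f M (∑ j, t j • v j))
    (hnonneg : 0 ≤ f (∑ j, t j • v j)) :
    ∃ y ∈ M, y ∈ convexHull ℝ ({0} ∪ Set.range v) ∧ IsMinOn f M y := by
  by_cases hsum : ∑ j, t j ≤ 1
  · exact ⟨_, hmem, sum_smul_mem_convexHull_zero_union_range ht hsum v, hmin⟩
  replace hsum := (not_le.1 hsum).le
  have : Nonempty ι := by
    by_contra h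
    norm_num [not_nonempty_iff.1 h] at hsum
  obtain ⟨k, hk⟩ := Finite.exists_min (f ∘ v)
  have hvk : 0 ≤ f (v k) := hnonneg.trans (isMinOn_iff.1 hmin _ (hv k))
  refine ⟨v k, hv k, subset_convexHull ℝ _ (Or.inr ⟨k, rfl⟩), fun x hx => ?_⟩
  calc f (v k) ≤ (∑ j, t j) * f (v k) := le_mul_of_one_le_left hvk hsum
    _ = ∑ j, t j * f (v k) := Finset.sum_mul ..
    _ ≤ ∑ j, t j * f (v j) := Finset.sum_le_sum fun j _ => mul_le_mul_of_nonneg_left (hk j) (ht j)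
    _ = f (∑ j, t j • v j) := by simp [map_sum]
    _ ≤ f x := hmin hx

end

section

variable {m ι : Type*} [Fintype ι]

def coneLatticePoints (B : Matrix m ι ℤ) : Set (m → ℝ) :=
  {x | (∃ t : ι → ℝ, (∀ i, 0 ≤ t i) ∧ x = (B.map (Int.cast : ℤ → ℝ)).mulVec t) ∧
    (∃ z : m → ℤ, x = fun i => (z i : ℝ)) ∧ x ≠ 0}

theorem col_mem_coneLatticePoints [DecidableEq ι] {B : Matrix m ι ℤ} {j : ι}
    (hj : (fun i => B i j) ≠ 0) : (fun i => (B i j : ℝ)) ∈ coneLatticePoints B := by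
  refine ⟨⟨Pi.single j 1, fun i => ?_, ?_⟩, ⟨fun i => B i j, rfl⟩, fun h => ?_⟩
  · by_cases h : i = j <;> simp [h]
  · ext i; simp
  · exact hj (funext fun i => by simpa using congrFun h i)

theorem two_smul_mem_coneLatticePoints {B : Matrix m ι ℤ} {x : m → ℝ}
    (hx : x ∈ coneLatticePoints B) : (2 : ℝ) • x ∈ coneLatticePoints B := by
  obtain ⟨⟨t, ht, rfl⟩, ⟨z, hz⟩, hne⟩ := hx
  exact ⟨⟨(2 : ℝ) • t, fun i => by simp [ht i], (mulVec_smul ..).symm⟩,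
    ⟨2 • z, by rw [hz]; ext i; simp⟩, smul_ne_zero two_ne_zero hne⟩

end

/-- **Lemma 1.** Let `B` be an `n × s` integer matrix with all columns nonzero,
let `M = cone(B) ∩ ℤ^n \ {0}`, and let `c ∈ ℝ^n`. If the infimum of `c⋅x` over `x ∈ M`
is attained, then it is attained at some point of `M` lying in the convex hull of the origin
together with the columns of `B`. -/
theorem min_over_cone_lattice_in_conv {n s : ℕ} (B : Matrix (Fin n) (Fin s) ℤ)
    (hcols : ∀ j : Fin s, (fun i => B i j) ≠ (0 : Fin n → ℤ))
    (c : Fin n → ℝ) (M : Set (Fin n → ℝ))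
    (hM : M = {x : Fin n → ℝ |
      (∃ t : Fin s → ℝ, (∀ i, 0 ≤ t i) ∧ x = (B.map (Int.cast : ℤ → ℝ)).mulVec t) ∧
      (∃ z : Fin n → ℤ, x = fun i => (z i : ℝ)) ∧ x ≠ 0})
    (hattained : ∃ x₀ ∈ M, ∀ x ∈ M, ∑ i, c i * x₀ i ≤ ∑ i, c i * x i) :
    ∃ y ∈ M, y ∈ convexHull ℝ ({0} ∪ Set.range fun j : Fin s => fun i => (B i j : ℝ)) ∧
      ∀ x ∈ M, ∑ i, c i * y i ≤ ∑ i, c i * x i := by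
  change M = coneLatticePoints B at hM
  subst hM
  obtain ⟨x₀, hx₀, hmin⟩ := hattained
  let f := dotProductBilin ℝ ℝ c
  replace hmin : IsMinOn f _ x₀ := isMinOn_iff.2 hmin
  have hnonneg : 0 ≤ f x₀ := by
    have := isMinOn_iff.1 hmin _ (two_smul_mem_coneLatticePoints hx₀)
    rw [map_smul, smul_eq_mul] at this
    linarith
  obtain ⟨t, ht, hx₀t⟩ := hx₀.1
  have hx₀sum : x₀ = ∑ j, t j • fun i => (B i j : ℝ) := by
    rw [hx₀t]; ext i; simp [mulVec, dotProduct, mul_comm]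
  subst hx₀sum
  obtain ⟨y, hyM, hyconv, hymin⟩ := exists_isMinOn_mem_convexHull_zero_union_range f
    (fun j => col_mem_coneLatticePoints (hcols j)) ht hx₀ hmin hnonneg
  exact ⟨y, hyM, hyconv, isMinOn_iff.1 hymin⟩
end

section
/- Let A be an m×n integer matrix of rank n and b ∈ ℤ^m such that P(A,b) = {x ∈ ℝ^n : Ax ≤ b} is a nonempty bounded full-dimensional polytope, and suppose every component b_i of b is divisible by Δ_lcm(A). Then every vertex (extreme point) of P(A,b) is an integer point, i.e. lies in ℤ^n. -/
/-!
At an extreme point `x` of `P(A,b)` the rows of `A` that are tight at `x` have no common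
nonzero kernel vector `d`, since otherwise `x ± t d` would stay in `P(A,b)` for small `t`.
Hence some `n` tight rows form a nonsingular submatrix `N` with `N x = b_N`, and by Cramer's
rule `x = adj(N) (b_N / det N)` is integral, because `det N ∣ Δ_lcm(A) ∣ b`.
-/

open Matrix

/-- The polyhedron `P(A,b) = {x ∈ ℝ^n : A x ≤ b}` of an integer matrix `A` and
integer right-hand side `b`. -/
def poly {m n : ℕ} (A : Matrix (Fin m) (Fin n) ℤ) (b : Fin m → ℤ) : Set (Fin n → ℝ) :=
  {x | ∀ i, ((A.map (Int.cast : ℤ → ℝ)).mulVec x) i ≤ (b i : ℝ)}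

/-- The lattice width of a set `P ⊆ ℝ^n`: the minimum (infimum) over nonzero integer
vectors `c` of `sup_{x ∈ P} c⋅x − inf_{x ∈ P} c⋅x`. -/
noncomputable def width {n : ℕ} (P : Set (Fin n → ℝ)) : ℝ :=
  sInf {w : ℝ | ∃ c : Fin n → ℤ, c ≠ 0 ∧
    w = sSup ((fun x : Fin n → ℝ => ∑ i, (c i : ℝ) * x i) '' P)
        - sInf ((fun x : Fin n → ℝ => ∑ i, (c i : ℝ) * x i) '' P)}

/-- `Δ(A)`: the maximum absolute value of the determinant of an `n × n` submatrix of `A`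
(an `n × n` submatrix is obtained by selecting `n` pairwise distinct rows). -/
def maxDet {m n : ℕ} (A : Matrix (Fin m) (Fin n) ℤ) : ℕ :=
  (Finset.univ.filter fun f : Fin n → Fin m => Function.Injective f).sup
    fun f => ((A.submatrix f id).det).natAbs

/-- The set of nonzero absolute values of determinants of `n × n` submatrices of `A`. -/
def detVals {m n : ℕ} (A : Matrix (Fin m) (Fin n) ℤ) : Finset ℕ :=
  ((Finset.univ.filter fun f : Fin n → Fin m => Function.Injective f).image
    fun f => ((A.submatrix f id).det).natAbs).erase 0

/-- `Δ_lcm(A)`: least common multiple of the nonzero absolute values of the determinants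
of `n × n` submatrices of `A`. -/
def lcmDet {m n : ℕ} (A : Matrix (Fin m) (Fin n) ℤ) : ℕ := (detVals A).lcm id

/-- `Δ_gcd(A)`: greatest common divisor of the nonzero absolute values of the determinants
of `n × n` submatrices of `A`. -/
def gcdDet {m n : ℕ} (A : Matrix (Fin m) (Fin n) ℤ) : ℕ := (detVals A).gcd id

/-- `δ(A)`: the minimum absolute value of the determinant of an `n × n` submatrix of `A`. -/
noncomputable def minDet {m n : ℕ} (A : Matrix (Fin m) (Fin n) ℤ) : ℕ :=
  sInf {d : ℕ | ∃ f : Fin n → Fin m, Function.Injective f ∧ ((A.submatrix f id).det).natAbs = d}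

open Filter Topology

theorem eq_zero_of_eventually_add_smul_mem_of_mem_extremePoints {E : Type*} [AddCommGroup E]
    [Module ℝ E] {A : Set E} {x d : E} (hx : x ∈ A.extremePoints ℝ)
    (hd : ∀ᶠ t in 𝓝 (0 : ℝ), x + t • d ∈ A) : d = 0 := by
  have hsymm : ∀ᶠ t in 𝓝 (0 : ℝ), x + t • d ∈ A ∧ x + (-t) • d ∈ A :=
    hd.and ((continuous_neg.tendsto' 0 0 neg_zero).eventually hd)
  obtain ⟨t, ⟨hplus, hminus⟩, ht⟩ :=
    ((hsymm.filter_mono nhdsWithin_le_nhds).and (self_mem_nhdsWithin (s := Set.Ioi 0))).exists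
  have hmid : x ∈ openSegment ℝ (x + t • d) (x + (-t) • d) :=
    ⟨1 / 2, 1 / 2, by norm_num, by norm_num, by norm_num, by module⟩
  have htd : t • d = 0 := by simpa using hx.2 hplus hminus hmid
  exact (smul_eq_zero.1 htd).resolve_left (ne_of_gt ht)

theorem injective_mulVec_tight_of_mem_extremePoints {ι κ : Type*} [Finite ι] [Fintype κ]
    (R : Matrix ι κ ℝ) (b : ι → ℝ) {x : κ → ℝ}
    (hx : x ∈ {y | ∀ i, (R *ᵥ y) i ≤ b i}.extremePoints ℝ) :
    Function.Injective
      (R.submatrix (Subtype.val : {i // (R *ᵥ x) i = b i} → ι) id).mulVec := by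
  refine (injective_iff_map_eq_zero (mulVecLin _)).2 fun d hd => ?_
  refine eq_zero_of_eventually_add_smul_mem_of_mem_extremePoints hx
    (eventually_all.2 fun i => ?_)
  have hline : ∀ t : ℝ, (R *ᵥ (x + t • d)) i = (R *ᵥ x) i + t * (R *ᵥ d) i := by
    intro t
    simp [mulVec_add, mulVec_smul]
  by_cases htight : (R *ᵥ x) i = b i
  · have hdi : (R *ᵥ d) i = 0 := congrFun hd ⟨i, htight⟩
    exact Eventually.of_forall fun t => by simp [hline, hdi, htight]
  · have hslack : (R *ᵥ x) i + (0 : ℝ) * (R *ᵥ d) i < b i := by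
      simpa using lt_of_le_of_ne (hx.1 i) htight
    have hcont : Continuous fun t : ℝ => (R *ᵥ x) i + t * (R *ᵥ d) i := by fun_prop
    filter_upwards [hcont.continuousAt.eventually_lt continuousAt_const hslack] with t ht
    exact (hline t).trans_le ht.le

theorem exists_submatrix_det_ne_zero_of_injective_mulVec {K ι κ : Type*} [Field K] [Finite ι]
    [Fintype κ] [DecidableEq κ] (R : Matrix ι κ K) (hR : Function.Injective R.mulVec) :
    ∃ f : κ → ι, Function.Injective f ∧ (R.submatrix f id).det ≠ 0 := by
  have hspan : Submodule.span K (Set.range R.row) = ⊤ := by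
    refine Submodule.eq_top_of_finrank_eq ?_
    rw [← rank_eq_finrank_span_row, rank, LinearMap.finrank_range_of_inj hR]
  obtain ⟨ι', a, ha, hspan', hli⟩ := exists_linearIndependent' K R.row
  let e : κ ≃ ι' := (Pi.basisFun K κ).indexEquiv
    (Module.Basis.mk hli (by rw [hspan', hspan]))
  refine ⟨a ∘ e, ha.comp e.injective, ?_⟩
  rw [← isUnit_iff_ne_zero, ← isUnit_iff_isUnit_det, ← linearIndependent_rows_iff_isUnit]
  exact hli.comp e e.injective

theorem exists_int_eq_of_mulVec_eq_of_det_dvd {K ι : Type*} [Field K] [CharZero K]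
    [Fintype ι] [DecidableEq ι] (N : Matrix ι ι ℤ) (hN : N.det ≠ 0) {c : ι → ℤ}
    (hc : ∀ j, N.det ∣ c j) {x : ι → K}
    (hx : N.map (Int.cast : ℤ → K) *ᵥ x = fun j => (c j : K)) :
    ∃ z : ι → ℤ, x = fun j => (z j : K) := by
  choose c' hc' using hc
  have hNz : N *ᵥ (N.adjugate *ᵥ c') = c := by
    rw [mulVec_mulVec, mul_adjugate, smul_mulVec, one_mulVec]
    exact funext fun j => (hc' j).symm
  refine ⟨N.adjugate *ᵥ c',
    mulVec_injective_of_det_ne_zero (M := N.map (Int.cast : ℤ → K)) ?_ ?_⟩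
  · rwa [← Int.cast_det, Int.cast_ne_zero]
  · rw [hx]
    funext j
    rw [← hNz]
    exact RingHom.map_mulVec (Int.castRingHom K) N _ j

theorem det_submatrix_dvd_lcmDet {m n : ℕ} (A : Matrix (Fin m) (Fin n) ℤ) {f : Fin n → Fin m}
    (hf : Function.Injective f) (hdet : (A.submatrix f id).det ≠ 0) :
    (A.submatrix f id).det ∣ (lcmDet A : ℤ) := by
  refine Int.natAbs_dvd.1 (Int.natCast_dvd_natCast.2 (Finset.dvd_lcm (f := id) ?_))
  exact Finset.mem_erase.2 ⟨Int.natAbs_ne_zero.2 hdet,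
    Finset.mem_image.2 ⟨f, Finset.mem_filter.2 ⟨Finset.mem_univ _, hf⟩, rfl⟩⟩

theorem vertices_integral_of_lcm_dvd_general {m n : ℕ} (A : Matrix (Fin m) (Fin n) ℤ)
    (b : Fin m → ℤ)
    (hdvd : ∀ i, (lcmDet A : ℤ) ∣ b i)
    (x : Fin n → ℝ) (hx : x ∈ Set.extremePoints ℝ (poly A b)) :
    ∃ z : Fin n → ℤ, x = fun i => (z i : ℝ) := by
  obtain ⟨f, hf, hdetR⟩ := exists_submatrix_det_ne_zero_of_injective_mulVec _
    (injective_mulVec_tight_of_mem_extremePoints (A.map Int.cast) (fun i => (b i : ℝ)) hx)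
  set g : Fin n → Fin m := Subtype.val ∘ f
  have hdet : (A.submatrix g id).det ≠ 0 := by
    rwa [← Int.cast_ne_zero (α := ℝ), Int.cast_det, ← submatrix_map]
  have hdvd_det : ∀ j, (A.submatrix g id).det ∣ b (g j) := fun j =>
    (det_submatrix_dvd_lcmDet A (Subtype.val_injective.comp hf) hdet).trans (hdvd _)
  exact exists_int_eq_of_mulVec_eq_of_det_dvd (A.submatrix g id) hdet hdvd_det
    (funext fun j => (f j).2)

/-- If `A` has rank `n`, `P(A,b)` is a nonempty bounded full-dimensional
polytope, and every component of `b` is divisible by `Δ_lcm(A)`, then every vertex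
(extreme point) of `P(A,b)` is an integer point. -/
theorem vertices_integral_of_lcm_dvd {m n : ℕ} (A : Matrix (Fin m) (Fin n) ℤ)
    (b : Fin m → ℤ)
    (hrank : A.rank = n)
    (hne : (poly A b).Nonempty)
    (hbdd : Bornology.IsBounded (poly A b))
    (hfull : (interior (poly A b)).Nonempty)
    (hdvd : ∀ i, (lcmDet A : ℤ) ∣ b i)
    (x : Fin n → ℝ) (hx : x ∈ Set.extremePoints ℝ (poly A b)) :
    ∃ z : Fin n → ℤ, x = fun i => (z i : ℝ) :=
  vertices_integral_of_lcm_dvd_general A b hdvd x hx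
end

section
/- Let A be an n×n integer matrix with Δ = |det(A)| > 0, let B be an n×s integer matrix, and b ∈ ℤ^n. Let M = {y ∈ ℤ^s : y ≥ 0 and there exists x ∈ ℤ^n with Ax + By = b}. Call y ∈ M irreducible if for all u, v ∈ ℤ^s with 0 ≤ u ≤ y, 0 ≤ v ≤ y (componentwise) and u ≠ v, the vector B(u − v) does not lie in the lattice A·ℤ^n. Then every irreducible point y ∈ M satisfies ∏_{k=1}^{s} (1 + y_k) ≤ Δ. -/
/-!
Irreducibility says that the `∏ k, (1 + y k)` points `u` of the box `0 ≤ u ≤ y` have pairwise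
distinct classes `B u` in `ℤ^n ⧸ A ℤ^n`, a group with `|det A|` elements.
-/

theorem Matrix.index_range_mulVecLin {ι : Type*} [Fintype ι] [DecidableEq ι]
    {A : Matrix ι ι ℤ} (hA : A.det ≠ 0) :
    (LinearMap.range A.mulVecLin).toAddSubgroup.index = A.det.natAbs := by
  let e := LinearEquiv.ofInjective A.mulVecLin (mulVec_injective_of_det_ne_zero hA)
  have hcomp : (LinearMap.range A.mulVecLin).subtype ∘ₗ (e : _ →+ _).toIntLinearMap =
      A.toLin' := rfl
  have hcard := Submodule.natAbs_det_equiv (LinearMap.range A.mulVecLin) e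
  rw [hcomp, LinearMap.det_toLin'] at hcard
  exact hcard.symm

theorem AddSubgroup.card_le_index_of_sub_mem {α G : Type*} [AddCommGroup G] (H : AddSubgroup G)
    [H.FiniteIndex] (f : α → G) (t : Finset α)
    (hf : ∀ u ∈ t, ∀ v ∈ t, f u - f v ∈ H → u = v) : t.card ≤ H.index := by
  have := Fintype.ofFinite (G ⧸ H)
  rw [AddSubgroup.index, Nat.card_eq_fintype_card, ← Finset.card_univ]
  refine Finset.card_le_card_of_injOn (fun u => (f u : G ⧸ H))
    (fun u _ => Finset.mem_coe.mpr (Finset.mem_univ _)) fun u hu v hv huv => ?_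
  exact hf u hu v hv (QuotientAddGroup.eq_iff_sub_mem.mp huv)

theorem Pi.card_Icc_zero_eq_prod {ι : Type*} [Fintype ι] [DecidableEq ι] {y : ι → ℤ}
    (hy : 0 ≤ y) : ((Finset.Icc 0 y).card : ℤ) = ∏ k, (1 + y k) := by
  rw [Pi.card_Icc]
  push_cast
  refine Finset.prod_congr rfl fun k _ => ?_
  have hk : 0 ≤ y k := hy k
  rw [Int.card_Icc, Pi.zero_apply, sub_zero, Int.toNat_of_nonneg (by omega), add_comm]

theorem irreducible_point_product_le_det_general {n s : ℕ} (A : Matrix (Fin n) (Fin n) ℤ)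
    (hA : A.det ≠ 0) (B : Matrix (Fin n) (Fin s) ℤ)
    (y : Fin s → ℤ) (hy0 : ∀ k, 0 ≤ y k)
    (hirr : ∀ u v : Fin s → ℤ, (∀ k, 0 ≤ u k ∧ u k ≤ y k) → (∀ k, 0 ≤ v k ∧ v k ≤ y k) →
      u ≠ v → ¬ ∃ z : Fin n → ℤ, B.mulVec (u - v) = A.mulVec z) :
    (∏ k, (1 + y k)) ≤ |A.det| := by
  have hindex := A.index_range_mulVecLin hA
  have : (LinearMap.range A.mulVecLin).toAddSubgroup.FiniteIndex :=
    ⟨hindex ▸ Int.natAbs_ne_zero.mpr hA⟩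
  have hbox : ∀ u ∈ Finset.Icc 0 y, ∀ k, 0 ≤ u k ∧ u k ≤ y k := fun u hu k =>
    ⟨(Finset.mem_Icc.mp hu).1 k, (Finset.mem_Icc.mp hu).2 k⟩
  have hcard := (LinearMap.range A.mulVecLin).toAddSubgroup.card_le_index_of_sub_mem
    B.mulVec (Finset.Icc 0 y) fun u hu v hv hmem => by
      obtain ⟨z, hz⟩ := LinearMap.mem_range.mp hmem
      by_contra hne
      exact hirr u v (hbox u hu) (hbox v hv) hne ⟨z, by rw [Matrix.mulVec_sub]; exact hz.symm⟩
  rw [← Pi.card_Icc_zero_eq_prod hy0, Int.abs_eq_natAbs, ← hindex]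
  exact_mod_cast hcard

/-- **Gomory.** Let `A` be an `n × n` integer matrix with `Δ = |det A| > 0`,
`B` an `n × s` integer matrix, `b ∈ ℤ^n`, and let
`M = {y ∈ ℤ^s : y ≥ 0, ∃ x ∈ ℤ^n, Ax + By = b}`. If `y ∈ M` is irreducible (for all
`u ≠ v` with `0 ≤ u ≤ y`, `0 ≤ v ≤ y`, the vector `B(u − v)` is not in the lattice `A·ℤ^n`),
then `∏ k, (1 + y k) ≤ Δ`. -/
theorem irreducible_point_product_le_det {n s : ℕ} (A : Matrix (Fin n) (Fin n) ℤ)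
    (hA : A.det ≠ 0) (B : Matrix (Fin n) (Fin s) ℤ) (b : Fin n → ℤ)
    (y : Fin s → ℤ) (hy0 : ∀ k, 0 ≤ y k)
    (hyM : ∃ x : Fin n → ℤ, A.mulVec x + B.mulVec y = b)
    (hirr : ∀ u v : Fin s → ℤ, (∀ k, 0 ≤ u k ∧ u k ≤ y k) → (∀ k, 0 ≤ v k ∧ v k ≤ y k) →
      u ≠ v → ¬ ∃ z : Fin n → ℤ, B.mulVec (u - v) = A.mulVec z) :
    (∏ k, (1 + y k)) ≤ |A.det| :=
  irreducible_point_product_le_det_general A hA B y hy0 hirr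
end

section
/- Let A be an n×n integer matrix with det(A) ≠ 0, let B be an n×s integer matrix, and b ∈ ℤ^n. Let M = {y ∈ ℤ^s : y ≥ 0 and there exists x ∈ ℤ^n with Ax + By = b}, viewed as a subset of ℝ^s. If y is an extreme point of the convex hull of M, then y is irreducible, i.e. for all u, v ∈ ℤ^s with 0 ≤ u ≤ y, 0 ≤ v ≤ y (componentwise) and u ≠ v, the vector B(u − v) does not lie in the lattice A·ℤ^n. -/
open Matrix

/-!
If `B (u - v) = A z`, then for a solution `A x + B y = b` both `y + (u - v)` and `y - (u - v)`
are again solutions (with `x ∓ z`), and for `0 ≤ u, v ≤ y` they stay nonnegative. So `y` is the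
midpoint of two points of `M`, and extremality forces `u = v`.
-/

theorem eq_zero_of_mem_extremePoints_of_add_mem_of_sub_mem {𝕜 E : Type*} [Ring 𝕜]
    [LinearOrder 𝕜] [IsStrictOrderedRing 𝕜] [Invertible (2 : 𝕜)] [AddCommGroup E] [Module 𝕜 E]
    {S : Set E} {x d : E} (hx : x ∈ S.extremePoints 𝕜) (hadd : x + d ∈ S) (hsub : x - d ∈ S) :
    d = 0 :=
  add_eq_left.mp (hx.2 hadd hsub (mem_openSegment_add_sub x d))

theorem Matrix.mulVec_sub_add_mulVec_add_of_mulVec_eq {R m n p : Type*}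
    [NonUnitalNonAssocRing R] [Fintype n] [Fintype p] (A : Matrix m n R) (B : Matrix m p R)
    {x z : n → R} {y d : p → R} {b : m → R} (h : A *ᵥ x + B *ᵥ y = b) (hd : B *ᵥ d = A *ᵥ z) :
    A *ᵥ (x - z) + B *ᵥ (y + d) = b := by
  rw [mulVec_sub, mulVec_add, hd, ← h]
  abel

theorem extreme_point_irreducible_general {n s : ℕ} (A : Matrix (Fin n) (Fin n) ℤ)
    (B : Matrix (Fin n) (Fin s) ℤ) (b : Fin n → ℤ)
    (M : Set (Fin s → ℝ))
    (hM : M = {w : Fin s → ℝ | ∃ y : Fin s → ℤ, (∀ k, 0 ≤ y k) ∧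
      (∃ x : Fin n → ℤ, A.mulVec x + B.mulVec y = b) ∧ w = fun k => (y k : ℝ)})
    (y : Fin s → ℤ)
    (hy : (fun k => (y k : ℝ)) ∈ Set.extremePoints ℝ (convexHull ℝ M)) :
    ∀ u v : Fin s → ℤ, (∀ k, 0 ≤ u k ∧ u k ≤ y k) → (∀ k, 0 ≤ v k ∧ v k ≤ y k) →
      u ≠ v → ¬ ∃ z : Fin n → ℤ, B.mulVec (u - v) = A.mulVec z := by
  rintro u v hu hv huv ⟨z, hz⟩
  let ι : (Fin s → ℤ) →+ (Fin s → ℝ) := AddMonoidHom.compLeft (Int.castAddHom ℝ) (Fin s)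
  obtain ⟨y', -, ⟨x, hx⟩, hy'⟩ : _ ∈ {w | _} := hM ▸ extremePoints_convexHull_subset hy
  obtain rfl : y = y' := funext fun k => by exact_mod_cast congrFun hy' k
  have shift_mem : ∀ d z', B *ᵥ d = A *ᵥ z' → (∀ k, 0 ≤ y k + d k) →
      ι y + ι d ∈ convexHull ℝ M := fun d z' hd hyd =>
    map_add ι y d ▸ subset_convexHull ℝ M
      (hM ▸ ⟨y + d, hyd, ⟨_, mulVec_sub_add_mulVec_add_of_mulVec_eq A B hx hd⟩, rfl⟩)
  have hadd := shift_mem (u - v) z hz fun k => by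
    rw [Pi.sub_apply]; linarith [hu k, hv k]
  have hsub := shift_mem (-(u - v)) (-z) (by rw [mulVec_neg, hz, mulVec_neg]) fun k => by
    rw [Pi.neg_apply, Pi.sub_apply]; linarith [hu k, hv k]
  rw [map_neg, ← sub_eq_add_neg] at hsub
  have huv_zero : ι (u - v) = 0 := eq_zero_of_mem_extremePoints_of_add_mem_of_sub_mem hy hadd hsub
  exact huv (sub_eq_zero.mp (Int.cast_injective.comp_left (huv_zero.trans (map_zero ι).symm)))

/-- **Gomory.** Let `A` be an `n × n` integer matrix with `det A ≠ 0`, `B` an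
`n × s` integer matrix, `b ∈ ℤ^n`, and `M = {y ∈ ℤ^s : y ≥ 0, ∃ x ∈ ℤ^n, Ax + By = b}`
viewed as a subset of `ℝ^s`. If `y` is an extreme point of the convex hull of `M`, then `y`
is irreducible: for all `u ≠ v` with `0 ≤ u ≤ y`, `0 ≤ v ≤ y` componentwise,
`B(u − v)` does not lie in the lattice `A·ℤ^n`. -/
theorem extreme_point_irreducible {n s : ℕ} (A : Matrix (Fin n) (Fin n) ℤ)
    (hA : A.det ≠ 0) (B : Matrix (Fin n) (Fin s) ℤ) (b : Fin n → ℤ)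
    (M : Set (Fin s → ℝ))
    (hM : M = {w : Fin s → ℝ | ∃ y : Fin s → ℤ, (∀ k, 0 ≤ y k) ∧
      (∃ x : Fin n → ℤ, A.mulVec x + B.mulVec y = b) ∧ w = fun k => (y k : ℝ)})
    (y : Fin s → ℤ)
    (hy : (fun k => (y k : ℝ)) ∈ Set.extremePoints ℝ (convexHull ℝ M)) :
    ∀ u v : Fin s → ℤ, (∀ k, 0 ≤ u k ∧ u k ≤ y k) → (∀ k, 0 ≤ v k ∧ v k ≤ y k) →
      u ≠ v → ¬ ∃ z : Fin n → ℤ, B.mulVec (u - v) = A.mulVec z :=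
  extreme_point_irreducible_general A B b M hM y hy
end

section
/- Let A be an n×n integer matrix with Δ = |det(A)| > 0, let B be an n×s integer matrix, and b ∈ ℤ^n. Let M = {y ∈ ℤ^s : y ≥ 0 and there exists x ∈ ℤ^n with Ax + By = b}. If y is an extreme point of the convex hull of M in ℝ^s, then ∏_{k=1}^{s} (1 + y_k) ≤ Δ. -/
open Matrix

/-!
The box `{z : 0 ≤ z ≤ y}` contains `∏ k, (1 + y k)` integer points, while `A ℤⁿ` has index
`|det A|` in `ℤⁿ`. If the box were larger, pigeonhole would give box points `z₁ ≠ z₂` with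
`B z₁ ≡ B z₂ (mod A ℤⁿ)`; then `y ± (z₂ - z₁)` both lie in `M` and `y` is their midpoint,
so `y` is not extreme.
-/

theorem Matrix.index_range_toLin' {ι : Type*} [Fintype ι] [DecidableEq ι]
    (A : Matrix ι ι ℤ) (hA : A.det ≠ 0) :
    (LinearMap.range A.toLin').toAddSubgroup.index = A.det.natAbs := by
  have hinj : Function.Injective A.toLin' :=
    isLeftRegular_iff_mulVec_injective.1
      (isRegular_of_isLeftRegular_det (IsRegular.of_ne_zero hA).left).left
  rw [← LinearMap.det_toLin']
  exact (Submodule.natAbs_det_equiv _ (LinearEquiv.ofInjective _ hinj)).symm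

theorem Finset.card_Icc_zero_pi {σ : Type*} [Fintype σ] [DecidableEq σ] {y : σ → ℤ}
    (hy : ∀ k, 0 ≤ y k) : ((Finset.Icc 0 y).card : ℤ) = ∏ k, (1 + y k) := by
  rw [Pi.card_Icc]
  push_cast [Int.card_Icc, sub_zero, Pi.zero_apply]
  refine Finset.prod_congr rfl fun k _ => ?_
  rw [Int.toNat_of_nonneg (by linarith [hy k])]
  ring

theorem AddSubgroup.exists_ne_sub_mem_of_index_lt_card {α G : Type*} [DecidableEq α] [AddGroup G]
    (H : AddSubgroup G) [H.FiniteIndex] (f : α → G) {s : Finset α} (hs : H.index < s.card) :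
    ∃ z₁ ∈ s, ∃ z₂ ∈ s, z₁ ≠ z₂ ∧ -f z₁ + f z₂ ∈ H := by
  have := H.fintypeQuotientOfFiniteIndex
  obtain ⟨z₁, hz₁, z₂, hz₂, hne, heq⟩ := Finset.exists_ne_map_eq_of_card_lt_of_maps_to
    (t := Finset.univ) (f := fun z => (f z : G ⧸ H)) (by simpa [H.index_eq_card] using hs)
    (fun z _ => Finset.mem_univ _)
  exact ⟨z₁, hz₁, z₂, hz₂, hne, QuotientAddGroup.eq.1 heq⟩

theorem eq_zero_of_add_mem_of_sub_mem_extremePoints {𝕜 E : Type*} [Field 𝕜] [LinearOrder 𝕜]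
    [IsStrictOrderedRing 𝕜] [AddCommGroup E] [Module 𝕜 E] {T : Set E} {x d : E}
    (hx : x ∈ T.extremePoints 𝕜) (hadd : x + d ∈ T) (hsub : x - d ∈ T) : d = 0 := by
  have hmid : x ∈ openSegment 𝕜 (x + d) (x - d) :=
    ⟨1/2, 1/2, by norm_num, by norm_num, by norm_num, by module⟩
  simpa using hx.2 hadd hsub hmid

theorem Matrix.exists_ne_mem_Icc_mulVec_sub_eq_mulVec {ι σ : Type*} [Fintype ι] [DecidableEq ι]
    [Fintype σ] [DecidableEq σ] {A : Matrix ι ι ℤ} (hA : A.det ≠ 0) (B : Matrix ι σ ℤ)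
    {y : σ → ℤ} (hy : ∀ k, 0 ≤ y k) (hlt : |A.det| < ∏ k, (1 + y k)) :
    ∃ z₁ ∈ Finset.Icc 0 y, ∃ z₂ ∈ Finset.Icc 0 y, z₁ ≠ z₂ ∧ ∃ w, A *ᵥ w = B *ᵥ (z₂ - z₁) := by
  have hindex := A.index_range_toLin' hA
  have : (LinearMap.range A.toLin').toAddSubgroup.FiniteIndex := ⟨by simpa [hindex] using hA⟩
  obtain ⟨z₁, hz₁, z₂, hz₂, hne, w, hw⟩ :=
    AddSubgroup.exists_ne_sub_mem_of_index_lt_card _ (B *ᵥ ·) (s := Finset.Icc 0 y) (by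
      rwa [← Nat.cast_lt (α := ℤ), Finset.card_Icc_zero_pi hy, hindex, Int.natCast_natAbs])
  exact ⟨z₁, hz₁, z₂, hz₂, hne, w, by rw [mulVec_sub, sub_eq_neg_add]; exact hw⟩

/-- **Gomory.** Let `A` be an `n × n` integer matrix with `Δ = |det A| > 0`,
`B` an `n × s` integer matrix, `b ∈ ℤ^n`, and `M = {y ∈ ℤ^s : y ≥ 0, ∃ x ∈ ℤ^n, Ax + By = b}`
viewed as a subset of `ℝ^s`. If `y` is an extreme point of the convex hull of `M`, then
`∏ k, (1 + y k) ≤ Δ`. -/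
theorem extreme_point_product_le_det {n s : ℕ} (A : Matrix (Fin n) (Fin n) ℤ)
    (hA : A.det ≠ 0) (B : Matrix (Fin n) (Fin s) ℤ) (b : Fin n → ℤ)
    (M : Set (Fin s → ℝ))
    (hM : M = {w : Fin s → ℝ | ∃ y : Fin s → ℤ, (∀ k, 0 ≤ y k) ∧
      (∃ x : Fin n → ℤ, A.mulVec x + B.mulVec y = b) ∧ w = fun k => (y k : ℝ)})
    (y : Fin s → ℤ)
    (hy : (fun k => (y k : ℝ)) ∈ Set.extremePoints ℝ (convexHull ℝ M)) :
    (∏ k, (1 + y k)) ≤ |A.det| := by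
  obtain ⟨y', hy_nonneg, ⟨x, hx⟩, hy'y⟩ := hM ▸ extremePoints_convexHull_subset hy
  obtain rfl : y = y' := funext fun k => by exact_mod_cast congrFun hy'y k
  by_contra! hlt
  obtain ⟨z₁, hz₁, z₂, hz₂, hne, w, hw⟩ :=
    Matrix.exists_ne_mem_Icc_mulVec_sub_eq_mulVec hA B hy_nonneg hlt
  rw [Finset.mem_Icc] at hz₁ hz₂
  let toReal : (Fin s → ℤ) →+ (Fin s → ℝ) := (Int.castAddHom ℝ).compLeft _
  have hconv : ∀ y' : Fin s → ℤ, 0 ≤ y' → ∀ x', A *ᵥ x' + B *ᵥ y' = b →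
      toReal y' ∈ convexHull ℝ M := fun y' hy' x' hx' =>
    subset_convexHull ℝ M (hM ▸ ⟨y', hy', ⟨x', hx'⟩, rfl⟩)
  have hadd := hconv (y + (z₂ - z₁))
    (by rw [add_sub_left_comm]; exact add_nonneg hz₂.1 (sub_nonneg.2 hz₁.2)) (x - w)
    (by rw [mulVec_sub, mulVec_add, hw, ← hx]; abel)
  have hsub := hconv (y - (z₂ - z₁))
    (by rw [sub_sub_eq_add_sub, ← sub_add_eq_add_sub]; exact add_nonneg (sub_nonneg.2 hz₂.2) hz₁.1)
    (x + w) (by rw [mulVec_sub, mulVec_add, hw, ← hx]; abel)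
  rw [map_add] at hadd
  rw [map_sub] at hsub
  have hd := eq_zero_of_add_mem_of_sub_mem_extremePoints hy hadd hsub
  exact hne (sub_eq_zero.1 ((map_eq_zero_iff toReal Int.cast_injective.comp_left).1 hd)).symm
end

section
/- Let A be an (n+1)×n integer matrix and b ∈ ℤ^{n+1} such that P = P(A,b) = {x ∈ ℝ^n : Ax ≤ b} is an n-dimensional simplex. Let J ⊆ {1,…,n+1} with |J| = n, let Â = A_{J,*} and b̂ = b_J, suppose Δ = |det(Â)| > 0, and let v = Â^{-1} b̂ be the corresponding vertex of P. Define S = {x ∈ ℝ^n : Âx ≤ b̂ and ∑_{j∈J} (b̂_j − (Âx)_j) ≤ Δ − 1}. If the width w(P) is at least Δ − 1, then S ⊆ P. -/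
open Matrix

/-!
Let `i₀` be the row of `A` outside `J`, `a = A_{i₀,*}`, and measure points by their slacks
`s = b̂ - Â x ≥ 0` at the vertex `v`. Since `a = μ Â` with `μ = a Â⁻¹`, the inequality of row `i₀`
reads `∑ w_j s_j ≤ γ` with `w = -μ` and `γ = b_{i₀} - a v ≥ 0`. Boundedness of `P` forces `w > 0`
(otherwise `v - t Â⁻¹ e_j`, `t ≥ 0`, is a ray in `P`). On `P` the integral functional `Â_{j,*} x`
then varies in an interval of length `γ / w_j`, so `w(P) ≥ Δ - 1` gives `w_j (Δ - 1) ≤ γ` for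
every `j`, and `∑ s_j ≤ Δ - 1` implies `∑ w_j s_j ≤ max_j w_j · (Δ - 1) ≤ γ`.
-/

open Set Bornology

theorem dotProduct_le_of_sum_le {ι : Type*} [Fintype ι] {w s : ι → ℝ} {D γ : ℝ} (hw : 0 ≤ w)
    (hs : 0 ≤ s) (hsum : ∑ j, s j ≤ D) (hwD : ∀ j, w j * D ≤ γ) (hγ : 0 ≤ γ) : w ⬝ᵥ s ≤ γ := by
  cases isEmpty_or_nonempty ι
  · simpa using hγ
  obtain ⟨k, -, hk⟩ := Finset.univ.exists_max_image w Finset.univ_nonempty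
  calc w ⬝ᵥ s ≤ ∑ j, w k * s j :=
        Finset.sum_le_sum fun j _ => mul_le_mul_of_nonneg_right (hk j (Finset.mem_univ j)) (hs j)
    _ = w k * ∑ j, s j := (Finset.mul_sum ..).symm
    _ ≤ w k * D := mul_le_mul_of_nonneg_left hsum (hw k)
    _ ≤ γ := hwD k

theorem Bornology.IsBounded.image_of_continuous {α β : Type*} [PseudoMetricSpace α]
    [ProperSpace α] [PseudoMetricSpace β] {P : Set α} (hP : IsBounded P) {f : α → β}
    (hf : Continuous f) : IsBounded (f '' P) :=
  (hP.isCompact_closure.image hf).isBounded.subset (image_mono subset_closure)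

theorem Fin.exists_eq_or_mem_range_of_injective {n : ℕ} {g : Fin n → Fin (n + 1)}
    (hg : Function.Injective g) : ∃ i₀, ∀ i, i = i₀ ∨ i ∈ range g := by
  have hcard : (Finset.univ.image g)ᶜ.card = 1 := by
    simp [Finset.card_compl, Finset.card_image_of_injective _ hg]
  obtain ⟨i₀, hi₀⟩ := Finset.card_eq_one.mp hcard
  refine ⟨i₀, fun i => or_iff_not_imp_right.2 fun hi => ?_⟩
  have : i ∈ (Finset.univ.image g)ᶜ := by simpa using hi
  simpa [hi₀] using this

theorem isUnit_det_map_intCast {n : Type*} [Fintype n] [DecidableEq n] {A : Matrix n n ℤ}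
    (hA : A.det ≠ 0) : IsUnit (A.map (Int.cast : ℤ → ℝ)).det := by
  have hdet : (A.map (Int.cast : ℤ → ℝ)).det = A.det := (RingHom.map_det (Int.castRingHom ℝ) A).symm
  exact hdet ▸ isUnit_iff_ne_zero.2 (Int.cast_ne_zero.2 hA)

section CappedCone

variable {ι : Type*} [Fintype ι] [DecidableEq ι]

def cappedCone (R : Matrix ι ι ℝ) (v a : ι → ℝ) (β : ℝ) : Set (ι → ℝ) :=
  {y | R *ᵥ y ≤ R *ᵥ v ∧ a ⬝ᵥ y ≤ β}

variable {R : Matrix ι ι ℝ} {v a : ι → ℝ} {β : ℝ}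

theorem dotProduct_sub_eq_neg_vecMul_inv_dotProduct (hR : IsUnit R.det) (y : ι → ℝ) :
    a ⬝ᵥ y - a ⬝ᵥ v = -(a ᵥ* R⁻¹) ⬝ᵥ (R *ᵥ v - R *ᵥ y) := by
  rw [neg_dotProduct, ← dotProduct_neg, neg_sub, ← mulVec_sub, dotProduct_mulVec, vecMul_vecMul,
    nonsing_inv_mul R hR, vecMul_one, dotProduct_sub]

theorem vecMul_inv_lt_zero (hR : IsUnit R.det) (hK : IsBounded (cappedCone R v a β))
    (hv : a ⬝ᵥ v ≤ β) (j : ι) : (a ᵥ* R⁻¹) j < 0 := by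
  by_contra! hj
  set d := R⁻¹ *ᵥ Pi.single j 1
  have hRd : R *ᵥ d = Pi.single j 1 := by
    rw [mulVec_mulVec, mul_nonsing_inv R hR, one_mulVec]
  have hray : ∀ t : ℝ, 0 ≤ t → v - t • d ∈ cappedCone R v a β := by
    intro t ht
    refine ⟨?_, ?_⟩
    · rw [mulVec_sub, mulVec_smul, hRd]
      exact sub_le_self _ (smul_nonneg ht (Pi.single_nonneg.2 zero_le_one))
    · have := dotProduct_sub_eq_neg_vecMul_inv_dotProduct (a := a) (v := v) hR (v - t • d)
      rw [mulVec_sub, mulVec_smul, hRd, sub_sub_cancel, dotProduct_smul, dotProduct_single,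
        mul_one, smul_eq_mul, Pi.neg_apply] at this
      nlinarith
  -- along the ray `v - t • d` the `j`-th row of `R` decreases without bound
  obtain ⟨m, hm⟩ := (hK.image_of_continuous (f := fun y => (R *ᵥ y) j) (by fun_prop)).bddBelow
  have := hm ⟨_, hray (max 0 ((R *ᵥ v) j - m + 1)) (le_max_left _ _), rfl⟩
  simp only [mulVec_sub, mulVec_smul, hRd, Pi.sub_apply, Pi.smul_apply, Pi.single_eq_same,
    smul_eq_mul, mul_one] at this
  linarith [le_max_right 0 ((R *ᵥ v) j - m + 1)]

theorem mulVec_apply_mem_Icc (hR : IsUnit R.det) (hK : IsBounded (cappedCone R v a β))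
    (hv : a ⬝ᵥ v ≤ β) {y : ι → ℝ} (hy : y ∈ cappedCone R v a β) (j : ι) :
    (R *ᵥ y) j ∈ Icc ((R *ᵥ v) j - (β - a ⬝ᵥ v) / -(a ᵥ* R⁻¹) j) ((R *ᵥ v) j) := by
  have hw : ∀ k, 0 < -(a ᵥ* R⁻¹) k := fun k => neg_pos.2 (vecMul_inv_lt_zero hR hK hv k)
  have hs : ∀ k, 0 ≤ (R *ᵥ v - R *ᵥ y) k := fun k => sub_nonneg.2 (hy.1 k)
  have hslack : -(a ᵥ* R⁻¹) ⬝ᵥ (R *ᵥ v - R *ᵥ y) ≤ β - a ⬝ᵥ v := by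
    linarith [hy.2, dotProduct_sub_eq_neg_vecMul_inv_dotProduct (a := a) (v := v) hR y]
  have hj : -(a ᵥ* R⁻¹) j * (R *ᵥ v - R *ᵥ y) j ≤ β - a ⬝ᵥ v :=
    (Finset.single_le_sum (fun k _ => mul_nonneg (hw k).le (hs k)) (Finset.mem_univ j)).trans
      hslack
  refine ⟨?_, hy.1 j⟩
  rw [← le_div_iff₀' (hw j)] at hj
  simp only [Pi.sub_apply] at hj
  linarith

theorem mem_cappedCone_of_sum_le (hR : IsUnit R.det)
    (hK : IsBounded (cappedCone R v a β)) (hv : a ⬝ᵥ v ≤ β) {D : ℝ}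
    (hD : ∀ j, -(a ᵥ* R⁻¹) j * D ≤ β - a ⬝ᵥ v) {x : ι → ℝ} (hx : R *ᵥ x ≤ R *ᵥ v)
    (hsum : ∑ j, (R *ᵥ v - R *ᵥ x) j ≤ D) : x ∈ cappedCone R v a β := by
  refine ⟨hx, ?_⟩
  have := dotProduct_le_of_sum_le (w := -(a ᵥ* R⁻¹))
    (fun k => (neg_pos.2 (vecMul_inv_lt_zero hR hK hv k)).le) (sub_nonneg.2 hx) hsum hD
    (sub_nonneg.2 hv)
  linarith [dotProduct_sub_eq_neg_vecMul_inv_dotProduct (a := a) (v := v) hR x]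

end CappedCone

theorem width_le_of_forall_mem_Icc {n : ℕ} {P : Set (Fin n → ℝ)} (hP : IsBounded P)
    (hne : P.Nonempty) {c : Fin n → ℤ} (hc : c ≠ 0) {lo hi : ℝ}
    (h : ∀ y ∈ P, ∑ i, (c i : ℝ) * y i ∈ Icc lo hi) : width P ≤ hi - lo := by
  have hbdd (c' : Fin n → ℤ) :
      IsBounded ((fun y : Fin n → ℝ => ∑ i, (c' i : ℝ) * y i) '' P) :=
    hP.image_of_continuous (by fun_prop)
  set f : (Fin n → ℝ) → ℝ := fun y => ∑ i, (c i : ℝ) * y i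
  calc width P ≤ sSup (f '' P) - sInf (f '' P) := by
        refine csInf_le ⟨0, ?_⟩ ⟨c, hc, rfl⟩
        rintro _ ⟨c', -, rfl⟩
        exact sub_nonneg.2 (csInf_le_csSup (hne.image _) (hbdd c').bddBelow (hbdd c').bddAbove)
    _ ≤ hi - lo := by
        refine sub_le_sub (csSup_le (hne.image _) ?_) (le_csInf (hne.image _) ?_) <;>
          rintro _ ⟨y, hy, rfl⟩
        exacts [(h y hy).2, (h y hy).1]

theorem neg_vecMul_inv_mul_width_le {n : ℕ} {Â : Matrix (Fin n) (Fin n) ℤ} (hÂ : Â.det ≠ 0)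
    {v a : Fin n → ℝ} {β : ℝ}
    (hK : IsBounded (cappedCone (Â.map (Int.cast : ℤ → ℝ)) v a β))
    (hv : a ⬝ᵥ v ≤ β) (j : Fin n) :
    -(a ᵥ* (Â.map (Int.cast : ℤ → ℝ))⁻¹) j * width (cappedCone (Â.map (Int.cast : ℤ → ℝ)) v a β)
      ≤ β - a ⬝ᵥ v := by
  have hR := isUnit_det_map_intCast hÂ
  have hw := neg_pos.2 (vecMul_inv_lt_zero hR hK hv j)
  have hrow : Â j ≠ 0 := fun h0 => hÂ (det_eq_zero_of_row_eq_zero j (congrFun h0))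
  have := width_le_of_forall_mem_Icc hK ⟨v, le_rfl, hv⟩ hrow
    fun y hy => mulVec_apply_mem_Icc hR hK hv hy j
  rw [sub_sub_cancel, le_div_iff₀' hw] at this
  exact this

theorem poly_eq_cappedCone {m n : ℕ} {A : Matrix (Fin m) (Fin n) ℤ} {b : Fin m → ℤ}
    {g : Fin n → Fin m} {i₀ : Fin m} (hi₀ : ∀ i, i = i₀ ∨ i ∈ range g) {v : Fin n → ℝ}
    (hv : ((A.submatrix g id).map (Int.cast : ℤ → ℝ)) *ᵥ v = fun j => (b (g j) : ℝ)) :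
    poly A b = cappedCone ((A.submatrix g id).map Int.cast) v (fun k => (A i₀ k : ℝ)) (b i₀) := by
  ext y
  simp only [poly, cappedCone, mem_ofPred_eq, hv]
  refine ⟨fun h => ⟨fun k => h (g k), h i₀⟩, fun ⟨h, h₀⟩ i => ?_⟩
  rcases hi₀ i with rfl | ⟨k, rfl⟩
  exacts [h₀, h k]

theorem simplex_corner_set_subset_general {n : ℕ} (A : Matrix (Fin (n + 1)) (Fin n) ℤ)
    (b : Fin (n + 1) → ℤ)
    (hbdd : Bornology.IsBounded (poly A b))
    (g : Fin n → Fin (n + 1)) (hg : Function.Injective g)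
    (hdet : (A.submatrix g id).det ≠ 0)
    (v : Fin n → ℝ)
    (hv : ((A.submatrix g id).map (Int.cast : ℤ → ℝ)).mulVec v = fun j => (b (g j) : ℝ))
    (hvP : v ∈ Set.extremePoints ℝ (poly A b))
    (hwidth : width (poly A b) ≥ (((A.submatrix g id).det.natAbs : ℝ)) - 1) :
    {x : Fin n → ℝ |
        (∀ j, ((A.submatrix g id).map (Int.cast : ℤ → ℝ)).mulVec x j ≤ (b (g j) : ℝ)) ∧
        ∑ j, ((b (g j) : ℝ) - ((A.submatrix g id).map (Int.cast : ℤ → ℝ)).mulVec x j) ≤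
          ((A.submatrix g id).det.natAbs : ℝ) - 1} ⊆ poly A b := by
  obtain ⟨i₀, hi₀⟩ := Fin.exists_eq_or_mem_range_of_injective hg
  rw [poly_eq_cappedCone hi₀ hv] at hbdd hvP hwidth ⊢
  have hR := isUnit_det_map_intCast hdet
  have hvβ := (extremePoints_subset hvP).2
  rintro x ⟨hx, hsum⟩
  refine mem_cappedCone_of_sum_le hR hbdd hvβ (D := _ - 1) (fun j => ?_) (by rwa [hv])
    (by rwa [hv])
  exact (mul_le_mul_of_nonneg_left hwidth (neg_pos.2 (vecMul_inv_lt_zero hR hbdd hvβ j)).le).trans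
    (neg_vecMul_inv_mul_width_le hdet hbdd hvβ j)

/-- Let `P = P(A,b)` be an `n`-dimensional simplex given by an
`(n+1) × n` integer matrix `A` and `b ∈ ℤ^{n+1}`. Choose `n` of the rows via an injective
map `g : Fin n → Fin (n+1)`, set `Â = A_{J,*}`, `b̂ = b_J`, suppose `Δ = |det Â| > 0`, and
let `v = Â⁻¹ b̂` be the corresponding vertex of `P`. Put
`S = {x : Âx ≤ b̂, ∑_{j∈J} (b̂_j − (Âx)_j) ≤ Δ − 1}`. If `w(P) ≥ Δ − 1`, then `S ⊆ P`. -/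
theorem simplex_corner_set_subset {n : ℕ} (A : Matrix (Fin (n + 1)) (Fin n) ℤ)
    (b : Fin (n + 1) → ℤ)
    (hbdd : Bornology.IsBounded (poly A b))
    (hfull : (interior (poly A b)).Nonempty)
    (hvert : (Set.extremePoints ℝ (poly A b)).ncard = n + 1)
    (g : Fin n → Fin (n + 1)) (hg : Function.Injective g)
    (hdet : (A.submatrix g id).det ≠ 0)
    (v : Fin n → ℝ)
    (hv : ((A.submatrix g id).map (Int.cast : ℤ → ℝ)).mulVec v = fun j => (b (g j) : ℝ))
    (hvP : v ∈ Set.extremePoints ℝ (poly A b))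
    (hwidth : width (poly A b) ≥ (((A.submatrix g id).det.natAbs : ℝ)) - 1) :
    {x : Fin n → ℝ |
        (∀ j, ((A.submatrix g id).map (Int.cast : ℤ → ℝ)).mulVec x j ≤ (b (g j) : ℝ)) ∧
        ∑ j, ((b (g j) : ℝ) - ((A.submatrix g id).map (Int.cast : ℤ → ℝ)).mulVec x j) ≤
          ((A.submatrix g id).det.natAbs : ℝ) - 1} ⊆ poly A b :=
  simplex_corner_set_subset_general A b hbdd g hg hdet v hv hvP hwidth
end
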